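/- Let ψ be a nontrivial good character of F of conductor 1, and let 𝓛(F,ψ) be the ℂ(Γ)-linear span of the functions f·ψ_a for f ∈ 𝓛(F) and a ∈ F. Then ∫^F admits exactly one extension to a ℂ(Γ)-linear functional on 𝓛(F,ψ) that is invariant under translation by elements of F. -/

import Mathlib

noncomputable section

open MeasureTheory

/-- A field `F` with a split valuation `ν : F^× → Γ` (split by `t`), with residue field `k`,
residue map `ρ : O_F → k`, where `Γ` has a minimal positive element `one`. -/
structure LiftSetup (Γ F k : Type*) [AddCommGroup Γ] [LinearOrder Γ] [IsOrderedAddMonoid Γ] [Field F] [Field k] where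
  /-- the valuation (recorded on nonzero elements) -/
  ν : F → Γ
  /-- the splitting homomorphism `t : Γ → F^×` -/
  t : Γ → F
  /-- the residue map (recorded on the valuation ring) -/
  ρ : F → k
  /-- the minimal positive element of `Γ` -/
  one : Γ
  one_pos : 0 < one
  one_min : ∀ γ : Γ, 0 < γ → one ≤ γ
  ν_mul : ∀ x y : F, x ≠ 0 → y ≠ 0 → ν (x * y) = ν x + ν y
  ν_add : ∀ x y : F, x ≠ 0 → y ≠ 0 → x + y ≠ 0 → min (ν x) (ν y) ≤ ν (x + y)
  t_ne : ∀ γ : Γ, t γ ≠ 0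
  t_add : ∀ γ δ : Γ, t (γ + δ) = t γ * t δ
  ν_t : ∀ γ : Γ, ν (t γ) = γ
  ρ_add : ∀ x y : F, (x = 0 ∨ 0 ≤ ν x) → (y = 0 ∨ 0 ≤ ν y) → ρ (x + y) = ρ x + ρ y
  ρ_mul : ∀ x y : F, (x = 0 ∨ 0 ≤ ν x) → (y = 0 ∨ 0 ≤ ν y) → ρ (x * y) = ρ x * ρ y
  ρ_one : ρ 1 = 1
  ρ_surj : ∀ u : k, ∃ x : F, (x = 0 ∨ 0 ≤ ν x) ∧ ρ x = u
  ρ_eq_zero : ∀ x : F, (x = 0 ∨ 0 ≤ ν x) → (ρ x = 0 ↔ (x = 0 ∨ 0 < ν x))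

namespace LiftSetup

variable {Γ F k : Type*} [AddCommGroup Γ] [LinearOrder Γ] [IsOrderedAddMonoid Γ] [Field F] [Field k]
variable (S : LiftSetup Γ F k)

/-- The ring of integers `O_F` of the valuation. -/
def integers : Set F := {x | x = 0 ∨ 0 ≤ S.ν x}

/-- The translated fractional ideal `a + t(γ)O_F`. -/
def fracIdeal (a : F) (γ : Γ) : Set F := {x | (x - a) * S.t (-γ) ∈ S.integers}

/-- The lift `f^{a,γ}` of a function `f` on the residue field `k`:
`f^{a,γ}(x) = f(ρ((x-a)t(-γ)))` for `x ∈ a + t(γ)O_F` and `0` otherwise. -/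
def lift {A : Type*} [Zero A] (f : k → A) (a : F) (γ : Γ) : F → A :=
  (S.fracIdeal a γ).indicator fun x => f (S.ρ ((x - a) * S.t (-γ)))

/-- The homomorphism `η : F^× → k^×`, `x ↦ ρ(x t(-ν x))`. -/
def η (x : F) : k := S.ρ (x * S.t (-S.ν x))

end LiftSetup

section CGamma

variable (Γ : Type*) [AddCommGroup Γ] [LinearOrder Γ] [IsOrderedAddMonoid Γ]

instance : IsDomain (AddMonoidAlgebra ℂ Γ) := NoZeroDivisors.to_isDomain _

/-- `ℂ(Γ)`: the field of fractions of the complex group algebra of `Γ`. -/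
abbrev CGamma : Type _ := FractionRing (AddMonoidAlgebra ℂ Γ)

/-- The canonical embedding `ℂ → ℂ(Γ)`. -/
def embC : ℂ →+* CGamma Γ :=
  (algebraMap (AddMonoidAlgebra ℂ Γ) (CGamma Γ)).comp AddMonoidAlgebra.singleZeroRingHom

variable {Γ}

/-- The basis element `X^γ` of `ℂ(Γ)`. -/
def Xp (γ : Γ) : CGamma Γ :=
  algebraMap (AddMonoidAlgebra ℂ Γ) (CGamma Γ) (AddMonoidAlgebra.single γ 1)

end CGamma

section GoodChar

variable {Γ F k : Type*} [AddCommGroup Γ] [LinearOrder Γ] [IsOrderedAddMonoid Γ] [Field F] [Field k] [TopologicalSpace k]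

/-- `ψ` is a nontrivial good character of `F` of conductor `𝔣`: a homomorphism from the
additive group of `F` to the complex unit circle, trivial on `t(𝔣)O_F`, nontrivial on
`t(𝔣-1)O_F`, whose induced map `ψ̄` on the residue field `k` (given by
`ψ̄(ρ(x)) = ψ(t(𝔣-1)x)` for `x ∈ O_F`) is well defined and continuous. -/
def LiftSetup.IsGoodCharacter (S : LiftSetup Γ F k) (ψ : F → ℂ) (𝔣 : Γ) : Prop :=
  (∀ x y : F, ψ (x + y) = ψ x * ψ y) ∧
  (∀ x : F, ‖ψ x‖ = 1) ∧
  (∀ x ∈ S.integers, ψ (S.t 𝔣 * x) = 1) ∧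
  (∃ x ∈ S.integers, ψ (S.t (𝔣 - S.one) * x) ≠ 1) ∧
  (∃ ψbar : k → ℂ, Continuous ψbar ∧
    ∀ x ∈ S.integers, ψbar (S.ρ x) = ψ (S.t (𝔣 - S.one) * x))

end GoodChar

section LFmu

variable {Γ F k : Type*} [AddCommGroup Γ] [LinearOrder Γ] [IsOrderedAddMonoid Γ] [Field F] [Field k]
  [MeasurableSpace k]

open MeasureTheory

/-- `𝓛(F)`: the `ℂ(Γ)`-span of the lifts of Haar-integrable functions on `k`. -/
def LFmu (S : LiftSetup Γ F k) (μ : Measure k) : Submodule (CGamma Γ) (F → CGamma Γ) :=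
  Submodule.span (CGamma Γ)
    {g | ∃ f : k → ℂ, Integrable f μ ∧ ∃ (a : F) (γ : Γ),
        g = S.lift (fun u => embC Γ (f u)) a γ}

theorem liftC_mem_mu (S : LiftSetup Γ F k) (μ : Measure k)
    {f : k → ℂ} (hf : Integrable f μ) (a : F) (γ : Γ) :
    S.lift (fun u => embC Γ (f u)) a γ ∈ LFmu S μ :=
  Submodule.subset_span ⟨f, hf, a, γ, rfl⟩

/-- `𝓛^γ`: the complex span of the lifts of Haar-integrable functions at height `γ`. -/
def Lheight (S : LiftSetup Γ F k) (μ : Measure k) (γ : Γ) : Submodule ℂ (F → ℂ) :=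
  Submodule.span ℂ {g | ∃ f : k → ℂ, Integrable f μ ∧ ∃ a : F, g = S.lift f a γ}

end LFmu

section LFpsi

variable {Γ F k : Type*} [AddCommGroup Γ] [LinearOrder Γ] [IsOrderedAddMonoid Γ] [Field F] [Field k]
  [MeasurableSpace k]

open MeasureTheory

/-- `𝓛(F,ψ)`: the `ℂ(Γ)`-span of the functions `f·ψ_a` for `f ∈ 𝓛(F)`, `a ∈ F`. -/
def LFpsi (S : LiftSetup Γ F k) (μ : Measure k) (ψ : F → ℂ) :
    Submodule (CGamma Γ) (F → CGamma Γ) :=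
  Submodule.span (CGamma Γ)
    {g | ∃ f ∈ LFmu S μ, ∃ a : F, g = fun x => embC Γ (ψ (a * x)) * f x}

end LFpsi

/-!
For `ν(a) + γ ≥ 0` the character `ψ_a` is, on `b + t(γ)O_F`, a constant times a continuous
character of `k`, so `ψ_a f^{b,γ}` lies in `𝓛(F)`; hence `𝓛(F,ψ)` is spanned by `𝓛(F)` and the
oscillating lifts `ψ_a f^{b,γ}` with `ν(a) + γ < 0`. Translating such a lift by `w = x₀ / a`,
where `ψ(x₀) ≠ 1` and `x₀ ∈ O_F`, multiplies it by `ψ(x₀) ≠ 1`, so every translation-invariant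
functional kills it: this gives uniqueness. For existence, extend `∫^F` by zero on the
oscillating lifts. This is well defined because `∫^F`, being translation invariant, kills every
element of `𝓛(F)` that is a combination of oscillating lifts: translating by `x₀ / a_j` with
`ν(a_j)` minimal scales every term and lets one eliminate the `j`-th, so induction on the number
of terms applies.
-/

namespace LinearMap

variable {R V N : Type*}

section Ring

variable [Ring R] [AddCommGroup V] [Module R V] [AddCommGroup N] [Module R N]

theorem exists_extension_of_le_sup {A B M : Submodule R V} (hM : M ≤ A ⊔ B)
    (J : A →ₗ[R] N) (hJ : ∀ x : A, (x : V) ∈ B → J x = 0) :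
    ∃ Jext : M →ₗ[R] N,
      (∀ (x : V) (hxA : x ∈ A) (hxM : x ∈ M), Jext ⟨x, hxM⟩ = J ⟨x, hxA⟩) ∧
      ∀ x ∈ B, ∀ hxM : x ∈ M, Jext ⟨x, hxM⟩ = 0 := by
  let f : V →ₗ.[R] N := ⟨A, J⟩
  let g : V →ₗ.[R] N := ⟨B, 0⟩
  have compat : ∀ (x : f.domain) (y : g.domain), (x : V) = y → f x = g y := fun x y hxy =>
    hJ x (hxy ▸ y.2)
  refine ⟨(f.sup g compat).toFun.comp (Submodule.inclusion hM), fun x hxA hxM => ?_,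
    fun x hxB hxM => ?_⟩
  · have h := LinearPMap.sup_apply compat ⟨x, hxA⟩ 0 ⟨x, hM hxM⟩ (add_zero x)
    rwa [LinearPMap.map_zero, add_zero] at h
  · have h := LinearPMap.sup_apply compat 0 ⟨x, hxB⟩ ⟨x, hM hxM⟩ (zero_add x)
    rwa [LinearPMap.map_zero, zero_add] at h

theorem ext_of_eq_sup {A B M : Submodule R V} (hM : M = A ⊔ B) {J₁ J₂ : M →ₗ[R] N}
    (hA : ∀ x ∈ A, ∀ hxM : x ∈ M, J₁ ⟨x, hxM⟩ = J₂ ⟨x, hxM⟩)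
    (hB : ∀ x ∈ B, ∀ hxM : x ∈ M, J₁ ⟨x, hxM⟩ = J₂ ⟨x, hxM⟩) : J₁ = J₂ := by
  subst hM
  ext ⟨x, hx⟩
  obtain ⟨a, ha, b, hb, rfl⟩ := Submodule.mem_sup.mp hx
  have hsplit : (⟨a + b, hx⟩ : ↥(A ⊔ B))
      = ⟨a, Submodule.mem_sup_left ha⟩ + ⟨b, Submodule.mem_sup_right hb⟩ := rfl
  rw [hsplit, map_add, map_add, hA a ha, hB b hb]

end Ring

variable [Field R] [AddCommGroup V] [Module R V] [AddCommGroup N] [Module R N]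

/-- Applying `T i - c` to a combination of elements of `t` removes `g` and keeps it in `A`, so
induction on `t` applies. -/
theorem eq_zero_of_mem_span_of_eigenvectors {ι : Type*} {A : Submodule R V} (J : A →ₗ[R] N)
    (T : ι → V →ₗ[R] V) (hA : ∀ i, A ≤ A.comap (T i))
    (hJ : ∀ i (x : A), J ⟨T i x, hA i x.2⟩ = J x) {s : Set V}
    (hs : ∀ t : Finset V, ↑t ⊆ s → t.Nonempty → ∃ g ∈ t, ∃ i, ∃ c : R,
      c ≠ 1 ∧ T i g = c • g ∧ ∀ y ∈ t, ∃ d : R, T i y = d • y)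
    (x : A) (hx : (x : V) ∈ Submodule.span R s) : J x = 0 := by
  classical
  obtain ⟨t, hts, hxt⟩ := Submodule.mem_span_finite_of_mem_span hx
  clear hx
  induction t using Finset.strongInduction generalizing x with
  | H t ih =>
  rcases t.eq_empty_or_nonempty with rfl | hne
  · have hx0 : x = 0 := Subtype.ext (by simpa using hxt)
    rw [hx0, map_zero]
  obtain ⟨g, hgt, i, c, hc, hTg, heigen⟩ := hs t hts hne
  set u := t.erase g
  have hu_inv : ∀ y ∈ Submodule.span R (u : Set V), T i y ∈ Submodule.span R (u : Set V) := by
    intro y hy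
    refine (Submodule.span_le (p := (Submodule.span R (u : Set V)).comap (T i))).mpr
      (fun z hz => ?_) hy
    obtain ⟨d, hd⟩ := heigen z (Finset.mem_of_mem_erase hz)
    simpa [hd] using Submodule.smul_mem _ d (Submodule.subset_span hz)
  obtain ⟨a, z, hz, hxz⟩ : ∃ a : R, ∃ z ∈ Submodule.span R (u : Set V), (x : V) = a • g + z := by
    rw [← Submodule.mem_span_insert, Finset.coe_erase, Set.insert_sdiff_singleton,
      Set.insert_eq_of_mem (Finset.mem_coe.mpr hgt)]
    exact hxt
  let y : A := ⟨T i x, hA i x.2⟩ - c • x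
  have hy : (y : V) ∈ Submodule.span R (u : Set V) := by
    have : (y : V) = T i z - c • z := by
      simp only [y, Submodule.coe_sub, Submodule.coe_smul, hxz, map_add, map_smul, hTg]
      module
    rw [this]
    exact Submodule.sub_mem _ (hu_inv z hz) (Submodule.smul_mem _ c hz)
  have hJy : J y = (1 - c) • J x := by
    simp only [y, map_sub, map_smul, hJ, sub_smul, one_smul]
  have := ih u (Finset.erase_ssubset hgt) y
    ((Finset.coe_erase g t ▸ Set.sdiff_subset).trans hts) hy
  rw [hJy] at this
  exact (smul_eq_zero.mp this).resolve_left (sub_ne_zero.mpr hc.symm)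

end LinearMap

namespace LiftSetup

variable {Γ F k : Type*} [AddCommGroup Γ] [LinearOrder Γ] [IsOrderedAddMonoid Γ] [Field F]
  [Field k] (S : LiftSetup Γ F k)

theorem ν_one : S.ν 1 = 0 := by
  simpa using S.ν_mul 1 1 one_ne_zero one_ne_zero

theorem ν_neg {x : F} (hx : x ≠ 0) : S.ν (-x) = S.ν x := by
  have h := S.ν_mul (-1) (-1) (by simp) (by simp)
  rw [neg_mul_neg, one_mul, S.ν_one] at h
  have hν : S.ν (-1 : F) = 0 := by
    rcases lt_trichotomy (S.ν (-1 : F)) 0 with h1 | h1 | h1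
    · exact absurd h (ne_of_gt (add_neg h1 h1))
    · exact h1
    · exact absurd h (ne_of_lt (add_pos h1 h1))
  rw [← neg_one_mul, S.ν_mul _ _ (by simp) hx, hν, zero_add]

theorem ν_inv {x : F} (hx : x ≠ 0) : S.ν x⁻¹ = -S.ν x := by
  have h := S.ν_mul x x⁻¹ hx (inv_ne_zero hx)
  rw [mul_inv_cancel₀ hx, S.ν_one] at h
  exact eq_neg_of_add_eq_zero_right h.symm

theorem t_zero : S.t 0 = 1 := by
  have h := S.t_add 0 0
  rw [add_zero] at h
  exact (mul_right_eq_self₀.mp h.symm).resolve_right (S.t_ne 0)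

theorem t_mul_t_neg (γ : Γ) : S.t γ * S.t (-γ) = 1 := by
  rw [← S.t_add, add_neg_cancel, S.t_zero]

theorem mul_t_mem_integers_iff {a : F} (ha : a ≠ 0) (γ : Γ) :
    a * S.t γ ∈ S.integers ↔ 0 ≤ S.ν a + γ := by
  simp [integers, ha, S.t_ne, S.ν_mul, S.ν_t]

theorem neg_mem_integers {x : F} (hx : x ∈ S.integers) : -x ∈ S.integers := by
  rcases eq_or_ne x 0 with rfl | hx0
  · simpa using hx
  · exact Or.inr ((S.ν_neg hx0).symm ▸ hx.resolve_left hx0)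

theorem add_mem_integers {x y : F} (hx : x ∈ S.integers) (hy : y ∈ S.integers) :
    x + y ∈ S.integers := by
  rcases eq_or_ne x 0 with rfl | hx0
  · simpa using hy
  rcases eq_or_ne y 0 with rfl | hy0
  · simpa using hx
  rcases eq_or_ne (x + y) 0 with hxy | hxy
  · exact Or.inl hxy
  · exact Or.inr ((le_min (hx.resolve_left hx0) (hy.resolve_left hy0)).trans
      (S.ν_add x y hx0 hy0 hxy))

theorem mul_mem_integers {x y : F} (hx : x ∈ S.integers) (hy : y ∈ S.integers) :
    x * y ∈ S.integers := by
  rcases eq_or_ne x 0 with rfl | hx0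
  · simpa using hx
  rcases eq_or_ne y 0 with rfl | hy0
  · simpa using hy
  refine Or.inr ?_
  rw [S.ν_mul x y hx0 hy0]
  exact add_nonneg (hx.resolve_left hx0) (hy.resolve_left hy0)

theorem add_mem_integers_iff {x z : F} (hz : z ∈ S.integers) :
    x + z ∈ S.integers ↔ x ∈ S.integers :=
  ⟨fun h => by simpa using S.add_mem_integers h (S.neg_mem_integers hz),
    fun h => S.add_mem_integers h hz⟩

theorem lift_apply_add {A : Type*} [Zero A] (f : k → A) (b : F) (γ : Γ) (x τ : F) :
    S.lift f b γ (x + τ) = S.lift f (b - τ) γ x := by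
  classical
  have h : x + τ - b = x - (b - τ) := by ring
  simp only [lift, Set.indicator_apply, fracIdeal, Set.mem_ofPred_eq, h]

theorem lift_apply_add_of_lt_ν {A : Type*} [Zero A] (f : k → A) (b : F) {γ : Γ} {w : F}
    (hw : w ≠ 0) (hγ : γ < S.ν w) (x : F) : S.lift f b γ (x + w) = S.lift f b γ x := by
  have hpos : 0 < S.ν (w * S.t (-γ)) := by
    rw [S.ν_mul w _ hw (S.t_ne _), S.ν_t, ← sub_eq_add_neg]
    exact sub_pos.mpr hγ
  have hz : w * S.t (-γ) ∈ S.integers := Or.inr hpos.le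
  have hsplit : (x + w - b) * S.t (-γ) = (x - b) * S.t (-γ) + w * S.t (-γ) := by ring
  have hmem : x + w ∈ S.fracIdeal b γ ↔ x ∈ S.fracIdeal b γ := by
    simp only [fracIdeal, Set.mem_ofPred_eq, hsplit, S.add_mem_integers_iff hz]
  by_cases hx : x ∈ S.fracIdeal b γ
  · rw [lift, Set.indicator_of_mem (hmem.mpr hx), Set.indicator_of_mem hx, hsplit,
      S.ρ_add _ _ hx hz, (S.ρ_eq_zero _ hz).mpr (Or.inr hpos), add_zero]
  · rw [lift, Set.indicator_of_notMem (mt hmem.mp hx), Set.indicator_of_notMem hx]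

end LiftSetup

namespace LiftSetup.IsGoodCharacter

variable {Γ F k : Type*} [AddCommGroup Γ] [LinearOrder Γ] [IsOrderedAddMonoid Γ] [Field F]
  [Field k] [TopologicalSpace k] {S : LiftSetup Γ F k} {ψ : F → ℂ} {𝔣 : Γ}

theorem map_add (hψ : S.IsGoodCharacter ψ 𝔣) (x y : F) : ψ (x + y) = ψ x * ψ y := hψ.1 x y

theorem map_zero (hψ : S.IsGoodCharacter ψ 𝔣) : ψ 0 = 1 := by
  have hne : ψ 0 ≠ 0 := fun h => by simpa [h] using hψ.2.1 0
  simpa [hne] using (hψ.map_add 0 0).symm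

theorem exists_ne_one (hψ : S.IsGoodCharacter ψ S.one) :
    ∃ x : F, x ≠ 0 ∧ 0 ≤ S.ν x ∧ ψ x ≠ 1 := by
  obtain ⟨x, hx, hψx⟩ := hψ.2.2.2.1
  rw [sub_self, S.t_zero, one_mul] at hψx
  have hx0 : x ≠ 0 := by
    rintro rfl
    exact hψx hψ.map_zero
  exact ⟨x, hx0, hx.resolve_left hx0, hψx⟩

theorem exists_residue_character (hψ : S.IsGoodCharacter ψ S.one) :
    ∃ ψbar : k → ℂ, Continuous ψbar ∧ (∀ x ∈ S.integers, ψbar (S.ρ x) = ψ x) ∧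
      ∀ u, ‖ψbar u‖ = 1 := by
  obtain ⟨ψbar, hcont, hψbar⟩ := hψ.2.2.2.2
  simp only [sub_self, S.t_zero, one_mul] at hψbar
  refine ⟨ψbar, hcont, hψbar, fun u => ?_⟩
  obtain ⟨x, hx, rfl⟩ := S.ρ_surj u
  rw [hψbar x hx]
  exact hψ.2.1 x

end LiftSetup.IsGoodCharacter

def shiftₗ (R : Type*) {F M : Type*} [Semiring R] [AddCommMonoid M] [Module R M] [Add F]
    (τ : F) : (F → M) →ₗ[R] (F → M) :=
  LinearMap.funLeft R M (· + τ)

section Translation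

variable {Γ F : Type*} [AddCommGroup Γ] [Field F] {ψ : F → ℂ}

/-- The character `ψ_a` of the statement, as a `ℂ(Γ)`-valued function. -/
def mulShiftC (ψ : F → ℂ) (a : F) : F → CGamma Γ := fun x => embC Γ (ψ (a * x))

theorem shiftₗ_mulShiftC_mul (hψ : ∀ x y, ψ (x + y) = ψ x * ψ y) (a τ : F)
    (g : F → CGamma Γ) :
    shiftₗ (CGamma Γ) τ (mulShiftC ψ a * g)
      = embC Γ (ψ (a * τ)) • (mulShiftC ψ a * shiftₗ (CGamma Γ) τ g) := by
  funext x
  simp only [shiftₗ, LinearMap.funLeft_apply, mulShiftC, Pi.mul_apply, Pi.smul_apply,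
    smul_eq_mul, mul_add, hψ, map_mul]
  ring

variable {k : Type*} [LinearOrder Γ] [IsOrderedAddMonoid Γ] [Field k] (S : LiftSetup Γ F k)

theorem shiftₗ_lift {A : Type*} [AddCommMonoid A] [Module (CGamma Γ) A] (f : k → A)
    (b : F) (γ : Γ) (τ : F) : shiftₗ (CGamma Γ) τ (S.lift f b γ) = S.lift f (b - τ) γ :=
  funext fun x => S.lift_apply_add f b γ x τ

theorem shiftₗ_mulShiftC_mul_lift_of_lt_ν (hψ : ∀ x y, ψ (x + y) = ψ x * ψ y) (a b : F)
    {γ : Γ} (f : k → CGamma Γ) {w : F} (hw : w ≠ 0) (hγ : γ < S.ν w) :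
    shiftₗ (CGamma Γ) w (mulShiftC ψ a * S.lift f b γ)
      = embC Γ (ψ (a * w)) • (mulShiftC ψ a * S.lift f b γ) := by
  rw [shiftₗ_mulShiftC_mul hψ]
  congr 2
  exact funext fun x => S.lift_apply_add_of_lt_ν f b hw hγ x

end Translation

section Spaces

variable {Γ F k : Type*} [AddCommGroup Γ] [LinearOrder Γ] [IsOrderedAddMonoid Γ] [Field F]
  [Field k] [MeasurableSpace k] (S : LiftSetup Γ F k) (μ : Measure k)

def oscillatingLifts (ψ : F → ℂ) : Set (F → CGamma Γ) :=
  {g | ∃ (a b : F) (γ : Γ) (f : k → ℂ), Integrable f μ ∧ a ≠ 0 ∧ S.ν a + γ < 0 ∧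
    g = mulShiftC ψ a * S.lift (fun u => embC Γ (f u)) b γ}

theorem LFmu_le_comap_shiftₗ (τ : F) : LFmu S μ ≤ (LFmu S μ).comap (shiftₗ (CGamma Γ) τ) :=
  Submodule.span_le.mpr <| by
    rintro _ ⟨f, hf, b, γ, rfl⟩
    simpa [shiftₗ_lift] using liftC_mem_mu S μ hf (b - τ) γ

theorem integral_shiftₗ (J : LFmu S μ →ₗ[CGamma Γ] CGamma Γ)
    (hJ : ∀ (f : k → ℂ) (hf : Integrable f μ) (a : F) (γ : Γ),
      J ⟨S.lift (fun u => embC Γ (f u)) a γ, liftC_mem_mu S μ hf a γ⟩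
        = embC Γ (∫ u, f u ∂μ) * Xp γ)
    (τ : F) (g : LFmu S μ) : J ⟨shiftₗ (CGamma Γ) τ g, LFmu_le_comap_shiftₗ S μ τ g.2⟩ = J g := by
  let Jτ := J.comp ((shiftₗ (CGamma Γ) τ).restrict (LFmu_le_comap_shiftₗ S μ τ))
  have hext : Jτ = J := LinearMap.ext_on Submodule.span_span_coe_preimage <| by
    rintro ⟨_, hg⟩ ⟨f, hf, b, γ, rfl⟩
    simp only [Jτ, LinearMap.comp_apply, LinearMap.restrict_apply, shiftₗ_lift]
    rw [hJ f hf (b - τ) γ, hJ f hf b γ]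
  exact LinearMap.congr_fun hext g

theorem span_oscillatingLifts_le_comap_shiftₗ {ψ : F → ℂ} (hψ : ∀ x y, ψ (x + y) = ψ x * ψ y)
    (τ : F) :
    Submodule.span (CGamma Γ) (oscillatingLifts S μ ψ)
      ≤ (Submodule.span (CGamma Γ) (oscillatingLifts S μ ψ)).comap (shiftₗ (CGamma Γ) τ) :=
  Submodule.span_le.mpr <| by
    rintro _ ⟨a, b, γ, f, hf, ha, haγ, rfl⟩
    rw [SetLike.mem_coe, Submodule.mem_comap, shiftₗ_mulShiftC_mul hψ, shiftₗ_lift]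
    exact Submodule.smul_mem _ _ (Submodule.subset_span ⟨a, b - τ, γ, f, hf, ha, haγ, rfl⟩)

end Spaces

section Oscillating

variable {Γ F k : Type*} [AddCommGroup Γ] [LinearOrder Γ] [IsOrderedAddMonoid Γ] [Field F]
  [Field k] [TopologicalSpace k] [MeasurableSpace k] {S : LiftSetup Γ F k} (μ : Measure k)
  {ψ : F → ℂ}

/-- If `ν(a) + γ ≥ 0`, then `ψ_a` is, on `b + t(γ)O_F`, the constant `ψ(ab)` times a character
of the residue field, so `ψ_a f^{b,γ}` is again the lift of an integrable function. -/
theorem mulShiftC_mul_lift_mem_LFmu [ContinuousMul k] [BorelSpace k]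
    (hψ : S.IsGoodCharacter ψ S.one) {a : F} {γ : Γ} (haγ : a * S.t γ ∈ S.integers)
    {f : k → ℂ} (hf : Integrable f μ) (b : F) :
    mulShiftC ψ a * S.lift (fun u => embC Γ (f u)) b γ ∈ LFmu S μ := by
  obtain ⟨ψbar, hcont, hψbar, hnorm⟩ := hψ.exists_residue_character
  let c : k := S.ρ (a * S.t γ)
  let g : k → ℂ := fun u => ψbar (c * u) * f u
  have hg : Integrable g μ :=
    hf.bdd_mul (hcont.comp (continuous_const_mul c)).aestronglyMeasurable
      (Filter.Eventually.of_forall fun u => (hnorm _).le)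
  suffices h : mulShiftC ψ a * S.lift (fun u => embC Γ (f u)) b γ
      = embC Γ (ψ (a * b)) • S.lift (fun u => embC Γ (g u)) b γ from
    h ▸ Submodule.smul_mem _ _ (liftC_mem_mu S μ hg b γ)
  funext x
  by_cases hx : x ∈ S.fracIdeal b γ
  · have hsplit : a * x = a * b + (a * S.t γ) * ((x - b) * S.t (-γ)) := by
      linear_combination (a * (x - b)) * (S.t_mul_t_neg γ).symm
    have hψx : ψ (a * x) = ψ (a * b) * ψbar (c * S.ρ ((x - b) * S.t (-γ))) := by
      rw [hsplit, hψ.map_add, ← S.ρ_mul _ _ haγ hx, hψbar _ (S.mul_mem_integers haγ hx)]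
    simp only [LiftSetup.lift, Set.indicator_of_mem hx, Pi.mul_apply, Pi.smul_apply,
      smul_eq_mul, mulShiftC, hψx, g, map_mul, mul_assoc]
  · simp [LiftSetup.lift, Set.indicator_of_notMem hx]

theorem LFpsi_eq_sup [ContinuousMul k] [BorelSpace k] (hψ : S.IsGoodCharacter ψ S.one) :
    LFpsi S μ ψ = LFmu S μ ⊔ Submodule.span (CGamma Γ) (oscillatingLifts S μ ψ) := by
  apply le_antisymm
  · refine Submodule.span_le.mpr ?_
    rintro _ ⟨g, hg, a, rfl⟩
    refine (Submodule.span_le (p := (LFmu S μ ⊔ Submodule.span (CGamma Γ)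
      (oscillatingLifts S μ ψ)).comap (LinearMap.mulLeft (CGamma Γ) (mulShiftC ψ a)))).mpr
      ?_ hg
    rintro _ ⟨f, hf, b, γ, rfl⟩
    by_cases haγ : a * S.t γ ∈ S.integers
    · exact Submodule.mem_sup_left (mulShiftC_mul_lift_mem_LFmu μ hψ haγ hf b)
    · have ha : a ≠ 0 := by
        rintro rfl
        exact haγ (by simp [LiftSetup.integers])
      rw [S.mul_t_mem_integers_iff ha, not_le] at haγ
      exact Submodule.mem_sup_right (Submodule.subset_span ⟨a, b, γ, f, hf, ha, haγ, rfl⟩)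
  · refine sup_le (Submodule.span_le.mpr ?_) (Submodule.span_le.mpr ?_)
    · rintro g hg
      exact Submodule.subset_span ⟨g, Submodule.subset_span hg, 0,
        funext fun x => by simp [hψ.map_zero]⟩
    · rintro _ ⟨a, b, γ, f, hf, -, -, rfl⟩
      exact Submodule.subset_span ⟨_, liftC_mem_mu S μ hf b γ, a, rfl⟩

end Oscillating

section Invariance

variable {Γ F k : Type*} [AddCommGroup Γ] [LinearOrder Γ] [IsOrderedAddMonoid Γ] [Field F]
  [Field k] [TopologicalSpace k] [MeasurableSpace k] {S : LiftSetup Γ F k} (μ : Measure k)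
  {ψ : F → ℂ} (hψ : S.IsGoodCharacter ψ S.one)
include hψ

/-- For finitely many oscillating lifts `ψ_{a_i} f_i^{b_i,γ_i}`, translation by
`w = x₀ / a_j`, where `ν(a_j)` is minimal and `ψ(x₀) ≠ 1`, has `ν(w)` above every height
`γ_i`, so it multiplies each of them by `ψ(a_i w)`, and the `j`-th one by `ψ(x₀) ≠ 1`. -/
theorem exists_shiftₗ_eigenvectors (t : Finset (F → CGamma Γ))
    (hts : ↑t ⊆ oscillatingLifts S μ ψ) (ht : t.Nonempty) :
    ∃ g ∈ t, ∃ w : F, ∃ c : CGamma Γ, c ≠ 1 ∧ shiftₗ (CGamma Γ) w g = c • g ∧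
      ∀ y ∈ t, ∃ d : CGamma Γ, shiftₗ (CGamma Γ) w y = d • y := by
  have hosc : ∀ g ∈ oscillatingLifts S μ ψ, ∃ (a b : F) (γ : Γ) (f : k → ℂ), a ≠ 0 ∧
      S.ν a + γ < 0 ∧ g = mulShiftC ψ a * S.lift (fun u => embC Γ (f u)) b γ :=
    fun g ⟨a, b, γ, f, _, ha, haγ, hg⟩ => ⟨a, b, γ, f, ha, haγ, hg⟩
  choose! a b γ f ha haγ hg using hosc
  obtain ⟨j, hjt, hjmin⟩ := t.exists_min_image (fun g => S.ν (a g)) ht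
  obtain ⟨x₀, hx₀, hνx₀, hψx₀⟩ := hψ.exists_ne_one
  have hajt := ha j (hts hjt)
  set w := x₀ * (a j)⁻¹
  have hw : w ≠ 0 := mul_ne_zero hx₀ (inv_ne_zero hajt)
  have hshift : ∀ y ∈ t, shiftₗ (CGamma Γ) w y = embC Γ (ψ (a y * w)) • y := by
    intro y hy
    have hνw : S.ν w = S.ν x₀ - S.ν (a j) := by
      rw [S.ν_mul _ _ hx₀ (inv_ne_zero hajt), S.ν_inv hajt, sub_eq_add_neg]
    have hγ : γ y < S.ν w := calc
      γ y < -S.ν (a y) := lt_neg_iff_add_neg'.mpr (haγ y (hts hy))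
      _ ≤ -S.ν (a j) := neg_le_neg (hjmin y hy)
      _ ≤ S.ν x₀ - S.ν (a j) := by rw [sub_eq_add_neg]; exact le_add_of_nonneg_left hνx₀
      _ = S.ν w := hνw.symm
    have h := shiftₗ_mulShiftC_mul_lift_of_lt_ν S hψ.map_add (a y) (b y)
      (fun u => embC Γ (f y u)) hw hγ
    rwa [← hg y (hts hy)] at h
  refine ⟨j, hjt, w, embC Γ (ψ x₀), ?_, ?_, fun y hy => ⟨_, hshift y hy⟩⟩
  · exact fun h => hψx₀ ((embC Γ).injective (h.trans (map_one _).symm))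
  · rw [hshift j hjt, show a j * w = x₀ by simp only [w]; field_simp]

theorem LFpsi_le_comap_shiftₗ [ContinuousMul k] [BorelSpace k] (τ : F) :
    LFpsi S μ ψ ≤ (LFpsi S μ ψ).comap (shiftₗ (CGamma Γ) τ) :=
  LFpsi_eq_sup μ hψ ▸ sup_le
    ((LFmu_le_comap_shiftₗ S μ τ).trans (Submodule.comap_mono le_sup_left))
    ((span_oscillatingLifts_le_comap_shiftₗ S μ hψ.map_add τ).trans
      (Submodule.comap_mono le_sup_right))

theorem apply_eq_zero_of_mem_span_oscillatingLifts {N : Type*} [AddCommGroup N]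
    [Module (CGamma Γ) N] {A : Submodule (CGamma Γ) (F → CGamma Γ)}
    (hA : ∀ τ : F, A ≤ A.comap (shiftₗ (CGamma Γ) τ)) (J : A →ₗ[CGamma Γ] N)
    (hJ : ∀ (τ : F) (g : A), J ⟨shiftₗ (CGamma Γ) τ g, hA τ g.2⟩ = J g)
    (g : A) (hg : (g : F → CGamma Γ) ∈ Submodule.span (CGamma Γ) (oscillatingLifts S μ ψ)) :
    J g = 0 :=
  LinearMap.eq_zero_of_mem_span_of_eigenvectors J (shiftₗ (CGamma Γ)) hA hJ
    (exists_shiftₗ_eigenvectors μ hψ) g hg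

end Invariance

open MeasureTheory in
theorem statement5_general
    {Γ F k : Type*} [AddCommGroup Γ] [LinearOrder Γ] [IsOrderedAddMonoid Γ] [Field F] [Field k]
    [TopologicalSpace k] [IsTopologicalRing k]
    [MeasurableSpace k] [BorelSpace k]
    (μ : Measure k)
    (S : LiftSetup Γ F k)
    (ψ : F → ℂ) (hψ : S.IsGoodCharacter ψ S.one)
    (J : LFmu S μ →ₗ[CGamma Γ] CGamma Γ)
    (hJ : ∀ (f : k → ℂ) (hf : Integrable f μ) (a : F) (γ : Γ),
      J ⟨S.lift (fun u => embC Γ (f u)) a γ, liftC_mem_mu S μ hf a γ⟩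
        = embC Γ (∫ u, f u ∂μ) * Xp γ) :
    ∃! Jext : LFpsi S μ ψ →ₗ[CGamma Γ] CGamma Γ,
      (∀ (g : F → CGamma Γ) (hg : g ∈ LFmu S μ) (hg' : g ∈ LFpsi S μ ψ),
        Jext ⟨g, hg'⟩ = J ⟨g, hg⟩) ∧
      (∀ (g : F → CGamma Γ) (hg : g ∈ LFpsi S μ ψ) (τ : F)
        (hg' : (fun x => g (x + τ)) ∈ LFpsi S μ ψ),
        Jext ⟨fun x => g (x + τ), hg'⟩ = Jext ⟨g, hg⟩) := by
  have hsup := LFpsi_eq_sup μ hψ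
  have hLFpsi_shift := LFpsi_le_comap_shiftₗ μ hψ
  obtain ⟨Jext, hJext, hJext_osc⟩ := LinearMap.exists_extension_of_le_sup hsup.le J
    (apply_eq_zero_of_mem_span_oscillatingLifts μ hψ (LFmu_le_comap_shiftₗ S μ) J
      (integral_shiftₗ S μ J hJ))
  have hJext_shift (τ : F) :
      Jext.comp ((shiftₗ (CGamma Γ) τ).restrict (hLFpsi_shift τ)) = Jext :=
    LinearMap.ext_of_eq_sup hsup
      (fun g hg _ => (hJext _ (LFmu_le_comap_shiftₗ S μ τ hg) _).trans
        ((integral_shiftₗ S μ J hJ τ ⟨g, hg⟩).trans (hJext g hg _).symm))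
      (fun g hg _ => (hJext_osc _ (span_oscillatingLifts_le_comap_shiftₗ S μ hψ.map_add τ hg) _).trans
        (hJext_osc g hg _).symm)
  refine ⟨Jext, ⟨hJext, fun g hg τ _ => LinearMap.congr_fun (hJext_shift τ) ⟨g, hg⟩⟩, ?_⟩
  rintro J' ⟨hJ'_ext, hJ'_shift⟩
  exact LinearMap.ext_of_eq_sup hsup
    (fun g hg hg' => (hJ'_ext g hg hg').trans (hJext g hg hg').symm)
    (fun g hg hg' => (apply_eq_zero_of_mem_span_oscillatingLifts μ hψ hLFpsi_shift J'
      (fun τ g => hJ'_shift g g.2 τ _) ⟨g, hg'⟩ hg).trans (hJext_osc g hg hg').symm)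

open MeasureTheory in
/-- Let `ψ` be a nontrivial good character of `F` of conductor `1`.  The
integral `∫^F` on `𝓛(F)` admits exactly one extension to a `ℂ(Γ)`-linear functional on
`𝓛(F,ψ)` which is invariant under translation by elements of `F`. -/
theorem statement5
    {Γ F k : Type*} [AddCommGroup Γ] [LinearOrder Γ] [IsOrderedAddMonoid Γ] [Field F] [Field k]
    [TopologicalSpace k] [IsTopologicalRing k] [LocallyCompactSpace k]
    [MeasurableSpace k] [BorelSpace k]
    (hk_nondiscrete : ¬ IsOpen ({0} : Set k))
    (μ : Measure k) [μ.IsAddHaarMeasure]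
    (S : LiftSetup Γ F k)
    (ψ : F → ℂ) (hψ : S.IsGoodCharacter ψ S.one)
    (J : LFmu S μ →ₗ[CGamma Γ] CGamma Γ)
    (hJ : ∀ (f : k → ℂ) (hf : Integrable f μ) (a : F) (γ : Γ),
      J ⟨S.lift (fun u => embC Γ (f u)) a γ, liftC_mem_mu S μ hf a γ⟩
        = embC Γ (∫ u, f u ∂μ) * Xp γ) :
    ∃! Jext : LFpsi S μ ψ →ₗ[CGamma Γ] CGamma Γ,
      (∀ (g : F → CGamma Γ) (hg : g ∈ LFmu S μ) (hg' : g ∈ LFpsi S μ ψ),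
        Jext ⟨g, hg'⟩ = J ⟨g, hg⟩) ∧
      (∀ (g : F → CGamma Γ) (hg : g ∈ LFpsi S μ ψ) (τ : F)
        (hg' : (fun x => g (x + τ)) ∈ LFpsi S μ ψ),
        Jext ⟨fun x => g (x + τ), hg'⟩ = Jext ⟨g, hg⟩) :=
  statement5_general μ S ψ hψ J hJ
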